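/- Let G* be a CPDAG faithful to the distribution over its vertices, and X, Y two distinct vertices. X is a definite non-cause of Y (i.e., X has no directed path to Y in any DAG of the equivalence class [G*]) if and only if the d-separation X ⊥ Y | pa(X, G*) holds in some (equivalently, every) DAG of [G*]. -/

import Mathlib

variable {V : Type*}

/-- A partially directed graph, with directed edges `dir` and undirected edges
`undir`; between two vertices there is at most one edge. -/
structure PDGraph (V : Type*) where
  dir : V → V → Prop
  undir : V → V → Prop
  undir_symm : ∀ {a b}, undir a b → undir b a
  dir_irrefl : ∀ a, ¬ dir a a
  undir_irrefl : ∀ a, ¬ undir a a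
  not_double : ∀ a b, dir a b → ¬ dir b a
  not_mixed : ∀ a b, dir a b → ¬ undir a b

namespace PDGraph

variable (G : PDGraph V)

/-- Two vertices are adjacent if joined by some edge. -/
def adj (a b : V) : Prop := G.dir a b ∨ G.dir b a ∨ G.undir a b

/-- Parents of `x`: vertices with a directed edge into `x`. -/
def pa (x : V) : Set V := {a | G.dir a x}

/-- Children of `x`: vertices with a directed edge from `x`. -/
def ch (x : V) : Set V := {b | G.dir x b}

/-- Siblings (undirected neighbours) of `x`. -/
def sib (x : V) : Set V := {a | G.undir a x}

end PDGraph

/-- A directed-edge relation is a DAG if it has no directed cycle. -/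
def IsDAG (E : V → V → Prop) : Prop := ∀ a, ¬ Relation.TransGen E a a

/-- A v-structure `a → b ← c` in a directed graph, with `a` and `c` non-adjacent. -/
def VStruct (E : V → V → Prop) (a b c : V) : Prop :=
  E a b ∧ E c b ∧ a ≠ c ∧ ¬ E a c ∧ ¬ E c a

/-- The DAG `E` belongs to the Markov equivalence class represented by the
partially directed graph `G`: it is obtained by orienting the undirected edges
of `G` acyclically without creating any new v-structure. -/
def InClass (G : PDGraph V) (E : V → V → Prop) : Prop :=
  IsDAG E ∧
  (∀ a b, G.dir a b → E a b) ∧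
  (∀ a b, G.undir a b → E a b ∨ E b a) ∧
  (∀ a b, E a b → G.adj a b) ∧
  (∀ a b c, VStruct E a b c → G.dir a b ∧ G.dir c b)

/-- `G` is a CPDAG: its class is nonempty, and every undirected edge of `G` is
oriented in both ways among the DAGs of the class (so an edge of `G` is
directed iff it is directed the same way in every DAG of the class). -/
def IsCPDAG (G : PDGraph V) : Prop :=
  (∃ E, InClass G E) ∧ ∀ a b, G.undir a b → ∃ E, InClass G E ∧ E a b

/-- A single step of a partially directed path away from the start. -/
def PDStep (G : PDGraph V) (a b : V) : Prop := G.dir a b ∨ G.undir a b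

/-- `p` is a partially directed path from `x` to `y` in `G`: distinct vertices,
no edge on it points back toward `x`. -/
def IsPDPath (G : PDGraph V) (x y : V) (p : List V) : Prop :=
  p.Nodup ∧ p.Chain' (PDStep G) ∧ p.head? = some x ∧ p.getLast? = some y

/-- A path is chordless in `G` if no two nonconsecutive vertices on it are adjacent. -/
def ChordlessIn (G : PDGraph V) (p : List V) : Prop :=
  ∀ (i j : ℕ) (hi : i < p.length) (hj : j < p.length),
    i + 1 < j → ¬ G.adj (p.get ⟨i, hi⟩) (p.get ⟨j, hj⟩)

/-- The critical set of `x` with respect to `y`: the vertices adjacent to `x`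
lying on (i.e. directly following `x` on) some chordless partially directed
path from `x` to `y`. -/
def criticalSet (G : PDGraph V) (x y : V) : Set V :=
  {c | ∃ p, IsPDPath G x y p ∧ ChordlessIn G p ∧ p[1]? = some c}

/-- One step along a path in the skeleton of the directed graph `E`. -/
def SkelStep (E : V → V → Prop) (a b : V) : Prop := E a b ∨ E b a

/-- The middle vertex `b` of a consecutive triple on a path is active given `Z`:
if it is a collider then it has a descendant in `Z`, otherwise it is not in `Z`. -/
def ActiveTriple (E : V → V → Prop) (Z : Set V) (a b c : V) : Prop :=
  (E a b ∧ E c b → ∃ d ∈ Z, Relation.ReflTransGen E b d) ∧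
  (¬ (E a b ∧ E c b) → b ∉ Z)

/-- `x` and `y` are d-connected given `Z` in the DAG `E`: neither endpoint is in
`Z` and there is a path between them on which every intermediate vertex is active. -/
def DConn (E : V → V → Prop) (Z : Set V) (x y : V) : Prop :=
  x ∉ Z ∧ y ∉ Z ∧ ∃ p : List V, p.Nodup ∧ p.Chain' (SkelStep E) ∧
    p.head? = some x ∧ p.getLast? = some y ∧
    ∀ (i : ℕ) (h : i + 2 < p.length),
      ActiveTriple E Z (p.get ⟨i, by omega⟩) (p.get ⟨i + 1, by omega⟩) (p.get ⟨i + 2, h⟩)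

/-- d-separation: `x ⟂ y | Z` in the DAG `E`. -/
def DSep (E : V → V → Prop) (Z : Set V) (x y : V) : Prop := ¬ DConn E Z x y

/-- `x` is an explicit cause of `y`: `G` itself has a directed path from `x` to `y`. -/
def ExplicitCause (G : PDGraph V) (x y : V) : Prop := Relation.TransGen G.dir x y

/-- `x` is a definite cause of `y`: every DAG in the class has a directed path
from `x` to `y`. -/
def DefiniteCause (G : PDGraph V) (x y : V) : Prop :=
  ∀ E, InClass G E → Relation.TransGen E x y

/-- `x` is a definite non-cause of `y`: no DAG in the class has a directed path
from `x` to `y`. -/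
def DefiniteNonCause (G : PDGraph V) (x y : V) : Prop :=
  ∀ E, InClass G E → ¬ Relation.TransGen E x y

/-- `x` is a possible cause of `y`: it is an ancestor of `y` in some but not
all DAGs of the class. -/
def PossibleCause (G : PDGraph V) (x y : V) : Prop :=
  (∃ E, InClass G E ∧ Relation.TransGen E x y) ∧
  (∃ E, InClass G E ∧ ¬ Relation.TransGen E x y)

/-- `x` is an implicit cause of `y`: a definite cause that is not explicit. -/
def ImplicitCause (G : PDGraph V) (x y : V) : Prop :=
  DefiniteCause G x y ∧ ¬ ExplicitCause G x y

/-- `x` and `y` lie in the same chain component of `G`: they are connected by a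
purely undirected path. -/
def SameChainComp (G : PDGraph V) (x y : V) : Prop := Relation.ReflTransGen G.undir x y

/-- A set of vertices pairwise joined by undirected edges. -/
def UClique (G : PDGraph V) (S : Set V) : Prop :=
  ∀ a ∈ S, ∀ b ∈ S, a ≠ b → G.undir a b

/-- `M` is a maximal clique of the induced subgraph of `G` over the siblings of `x`. -/
def MaxCliqueInSib (G : PDGraph V) (x : V) (M : Set V) : Prop :=
  M ⊆ G.sib x ∧ UClique G M ∧
    ∀ M', M' ⊆ G.sib x → UClique G M' → M ⊆ M' → M' = M

/-- `S` induces a complete subgraph of `G`: all its vertices pairwise adjacent. -/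
def CompleteIn (G : PDGraph V) (S : Set V) : Prop :=
  ∀ a ∈ S, ∀ b ∈ S, a ≠ b → G.adj a b


/-!
If some DAG of the class has a directed path from `x` to `y`, a shortest one is a chordless
partially directed path of `G`. No vertex on it is a collider or a parent of `x`, so it
d-connects `x` and `y` given `pa x` in every DAG of the class.

Conversely, take a shortest path d-connecting `x` and `y` given `pa x` in a DAG `E` of the
class. It begins with a chordless trek `x ← ⋯ ← s → ⋯`, which is a partially directed path of
`G` by Meek's rule R1. If the trek reaches `y`, some DAG of the class orients it from `x` to
`y`. Otherwise it ends at a collider, and a directed path from the collider into `pa x` leads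
to a contradiction by induction on its length.
-/

open Relation

section Basic

variable {G : PDGraph V} {E : V → V → Prop} {a b c : V}

theorem IsDAG.irrefl (hE : IsDAG E) (a : V) : ¬ E a a := fun h => hE a (.single h)

theorem IsDAG.asymm (hE : IsDAG E) (hab : E a b) : ¬ E b a :=
  fun hba => hE a (.head hab (.single hba))

theorem IsDAG.edge_of_transGen (hE : IsDAG E) (h : SkelStep E a b) (hab : TransGen E a b) :
    E a b :=
  h.resolve_right fun hba => hE a (hab.tail hba)

theorem PDGraph.adj_symm (h : G.adj a b) : G.adj b a := by
  rcases h with h | h | h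
  exacts [Or.inr (Or.inl h), Or.inl h, Or.inr (Or.inr (G.undir_symm h))]

namespace InClass

theorem isDAG (hE : InClass G E) : IsDAG E := hE.1

theorem of_dir (hE : InClass G E) (h : G.dir a b) : E a b := hE.2.1 a b h

theorem of_undir (hE : InClass G E) (h : G.undir a b) : SkelStep E a b := hE.2.2.1 a b h

theorem adj_of_edge (hE : InClass G E) (h : E a b) : G.adj a b := hE.2.2.2.1 a b h

theorem dir_of_vStruct (hE : InClass G E) (h : VStruct E a b c) : G.dir a b ∧ G.dir c b :=
  hE.2.2.2.2 a b c h

theorem skelStep_of_adj (hE : InClass G E) (h : G.adj a b) : SkelStep E a b := by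
  rcases h with h | h | h
  exacts [Or.inl (hE.of_dir h), Or.inr (hE.of_dir h), hE.of_undir h]

theorem pdStep_of_edge (hE : InClass G E) (h : E a b) : PDStep G a b := by
  rcases hE.adj_of_edge h with h' | h' | h'
  · exact Or.inl h'
  · exact absurd (hE.of_dir h') (hE.isDAG.asymm h)
  · exact Or.inr h'

theorem skelStep_of_pdStep (hE : InClass G E) (h : PDStep G a b) : SkelStep E a b :=
  h.elim (fun h => Or.inl (hE.of_dir h)) hE.of_undir

/-- Meek's rule R1: `c → b` would create a v-structure `a → b ← c` that `G` does not have. -/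
theorem orient_next (hE : InClass G E) (hab : E a b) (hbc : PDStep G b c)
    (hshield : G.undir b c → a ≠ c ∧ ¬ G.adj a c) : E b c := by
  rcases hbc with hbc | hbc
  · exact hE.of_dir hbc
  obtain ⟨hac, hn⟩ := hshield hbc
  refine (hE.of_undir hbc).resolve_right fun hcb => G.not_mixed c b ?_ (G.undir_symm hbc)
  exact (hE.dir_of_vStruct ⟨hab, hcb, hac, fun h => hn (hE.adj_of_edge h),
    fun h => hn (PDGraph.adj_symm (hE.adj_of_edge h))⟩).2

end InClass

theorem IsCPDAG.adj_of_dir_undir (hG : IsCPDAG G) (hab : G.dir a b) (hbc : G.undir b c)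
    (hac : a ≠ c) : G.adj a c := by
  by_contra hn
  obtain ⟨E, hE, hcb⟩ := hG.2 c b (G.undir_symm hbc)
  exact hE.isDAG.asymm (hE.orient_next (hE.of_dir hab) (Or.inr hbc) fun _ => ⟨hac, hn⟩) hcb

end Basic

section Chain

variable {E : V → V → Prop} {u : ℕ → V} {n : ℕ}

theorem reflTransGen_of_chain {i j : ℕ} (hij : i ≤ j)
    (h : ∀ t, i ≤ t → t < j → E (u t) (u (t + 1))) : ReflTransGen E (u i) (u j) := by
  induction j, hij using Nat.le_induction with
  | base => exact .refl
  | succ j hij ih => exact (ih fun t h1 h2 => h t h1 (by omega)).tail (h j hij (by omega))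

theorem transGen_of_chain {i j : ℕ} (hij : i < j)
    (h : ∀ t, i ≤ t → t < j → E (u t) (u (t + 1))) : TransGen E (u i) (u j) :=
  .head' (h i le_rfl hij) (reflTransGen_of_chain hij fun t h1 h2 => h t (by omega) h2)

theorem transGen_of_chain_rev {i j : ℕ} (hij : i < j)
    (h : ∀ t, i ≤ t → t < j → E (u (t + 1)) (u t)) : TransGen E (u j) (u i) :=
  transGen_swap.mp (transGen_of_chain (E := Function.swap E) hij h)

theorem exists_chain_of_reflTransGen {a b : V} (h : ReflTransGen E a b) :
    ∃ (n : ℕ) (u : ℕ → V), u 0 = a ∧ u n = b ∧ ∀ t < n, E (u t) (u (t + 1)) := by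
  induction h using Relation.ReflTransGen.head_induction_on with
  | refl => exact ⟨0, fun _ => b, rfl, rfl, by simp⟩
  | @head a c hac _ ih =>
    obtain ⟨n, u, hu0, hun, hu⟩ := ih
    refine ⟨n + 1, fun | 0 => a | t + 1 => u t, rfl, hun, ?_⟩
    rintro (_ | t) ht
    · show E a (u 0); rwa [hu0]
    · exact hu t (by omega)

theorem IsDAG.chain_injective (hE : IsDAG E) (hu : ∀ t < n, E (u t) (u (t + 1))) {i j : ℕ}
    (hij : i < j) (hjn : j ≤ n) : u i ≠ u j := fun h =>
  hE (u j) (by simpa only [h] using transGen_of_chain (E := E) hij fun t _ ht => hu t (by omega))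

def skip (u : ℕ → V) (i d : ℕ) : ℕ → V := fun t => u (if t ≤ i then t else t + d)

theorem skip_of_le {i d t : ℕ} (h : t ≤ i) : skip u i d t = u t := by simp [skip, h]

theorem skip_of_lt {i d t : ℕ} (h : i < t) : skip u i d t = u (t + d) := by
  simp [skip, Nat.not_le.mpr h]

theorem exists_shorter_chain {i j : ℕ} (hu : ∀ t < n, E (u t) (u (t + 1))) (hij : i + 2 ≤ j)
    (hjn : j ≤ n) (hchord : E (u i) (u j)) :
    ∃ n' < n, ∃ v : ℕ → V,
      v 0 = u 0 ∧ v n' = u n ∧ ∀ t < n', E (v t) (v (t + 1)) := by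
  refine ⟨n - (j - i - 1), by omega, skip u i (j - i - 1), skip_of_le (by omega), ?_, ?_⟩
  · rw [skip_of_lt (by omega)]; congr 1; omega
  intro t ht
  rcases Nat.lt_trichotomy t i with h | rfl | h
  · rw [skip_of_le h.le, skip_of_le h]; exact hu t (by omega)
  · rw [skip_of_le le_rfl, skip_of_lt (Nat.lt_succ_self t)]
    convert hchord using 2; omega
  · rw [skip_of_lt h, skip_of_lt (by omega), Nat.add_right_comm]; exact hu _ (by omega)

theorem IsDAG.not_skelStep_of_minimal_chain (hE : IsDAG E) (hu : ∀ t < n, E (u t) (u (t + 1)))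
    (hmin : ∀ n' < n, ∀ v : ℕ → V, v 0 = u 0 → v n' = u n →
      (∀ t < n', E (v t) (v (t + 1))) → False)
    {i j : ℕ} (hij : i + 2 ≤ j) (hjn : j ≤ n) : ¬ SkelStep E (u i) (u j) := by
  rintro (h | h)
  · obtain ⟨n', hn', v, hv0, hvn, hv⟩ := exists_shorter_chain hu hij hjn h
    exact hmin n' hn' v hv0 hvn hv
  · exact hE (u i) ((transGen_of_chain (by omega) fun t _ ht => hu t (by omega)).tail h)

end Chain

section ActivePaths

variable {E : V → V → Prop} {Z : Set V} {x y a b c : V}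

theorem ActiveTriple.of_not_collider (h : ¬ (E a b ∧ E c b)) (hb : b ∉ Z) :
    ActiveTriple E Z a b c :=
  ⟨fun h' => absurd h' h, fun _ => hb⟩

theorem ActiveTriple.of_collider (hab : E a b) (hcb : E c b)
    (hd : ∃ d ∈ Z, ReflTransGen E b d) : ActiveTriple E Z a b c :=
  ⟨fun _ => hd, fun h => absurd ⟨hab, hcb⟩ h⟩

theorem ActiveTriple.of_not_mem_of_desc (hb : b ∉ Z) (hd : ∃ d ∈ Z, ReflTransGen E b d) :
    ActiveTriple E Z a b c :=
  ⟨fun _ => hd, fun _ => hb⟩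

theorem ActiveTriple.of_not_mem (hE : IsDAG E) (hb : b ∉ Z) (h : E b a ∨ E b c) :
    ActiveTriple E Z a b c :=
  .of_not_collider (fun ⟨h1, h2⟩ => h.elim (hE.asymm · h1) (hE.asymm · h2)) hb

/-- The paths of `DConn`, indexed by `ℕ`; the values of `vert` beyond `len` are irrelevant. -/
structure ActivePath (E : V → V → Prop) (Z : Set V) (x y : V) where
  len : ℕ
  vert : ℕ → V
  one_le_len : 1 ≤ len
  vert_zero : vert 0 = x
  vert_len : vert len = y
  injOn : ∀ i ≤ len, ∀ j ≤ len, i ≠ j → vert i ≠ vert j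
  step : ∀ t < len, SkelStep E (vert t) (vert (t + 1))
  active : ∀ t, t + 2 ≤ len → ActiveTriple E Z (vert t) (vert (t + 1)) (vert (t + 2))

namespace ActivePath

variable (P : ActivePath E Z x y)

def IsShortest : Prop := ∀ Q : ActivePath E Z x y, P.len ≤ Q.len

theorem exists_isShortest (P : ActivePath E Z x y) : ∃ Q : ActivePath E Z x y, Q.IsShortest :=
  have : Nonempty (ActivePath E Z x y) := ⟨P⟩
  ⟨Function.argmin len, fun Q => Function.argmin_le len Q⟩

/-- Neighbouring positions are related by `s + 1 = t`, `t + 1 = r` rather than by truncated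
subtraction. -/
theorem activeAt {s t r : ℕ} (hs : s + 1 = t) (hr : t + 1 = r) (hrk : r ≤ P.len) :
    ActiveTriple E Z (P.vert s) (P.vert t) (P.vert r) := by
  subst hs hr; exact P.active s hrk

theorem not_mem {s t r : ℕ} (hs : s + 1 = t) (hr : t + 1 = r) (hrk : r ≤ P.len)
    (h : ¬ (E (P.vert s) (P.vert t) ∧ E (P.vert r) (P.vert t))) : P.vert t ∉ Z :=
  (P.activeAt hs hr hrk).2 h

theorem exists_desc {s t r : ℕ} (hs : s + 1 = t) (hr : t + 1 = r) (hrk : r ≤ P.len)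
    (h1 : E (P.vert s) (P.vert t)) (h2 : E (P.vert r) (P.vert t)) :
    ∃ d ∈ Z, ReflTransGen E (P.vert t) d :=
  (P.activeAt hs hr hrk).1 ⟨h1, h2⟩

theorem dConn (P : ActivePath E Z x y) (hx : x ∉ Z) (hy : y ∉ Z) : DConn E Z x y := by
  refine ⟨hx, hy, (List.range (P.len + 1)).map P.vert, ?_, ?_, ?_, ?_, ?_⟩
  · refine List.Nodup.map_on (fun i hi j hj hij => ?_) List.nodup_range
    simp only [List.mem_range] at hi hj
    by_contra hne
    exact P.injOn i (by omega) j (by omega) hne hij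
  · refine List.isChain_iff_getElem.mpr fun i hi => ?_
    simp only [List.length_map, List.length_range] at hi
    simpa using P.step i (by omega)
  · rw [List.head?_eq_getElem?]; simp [P.vert_zero]
  · rw [List.getLast?_eq_getElem?]; simp [P.vert_len]
  · intro i h
    simp only [List.length_map, List.length_range] at h
    simpa using P.active i (by omega)

theorem exists_shorter {i j : ℕ} (hij : i + 2 ≤ j) (hj : j ≤ P.len)
    (hstep : SkelStep E (P.vert i) (P.vert j))
    (hleft : ∀ s, s + 1 = i → ActiveTriple E Z (P.vert s) (P.vert i) (P.vert j))
    (hright : j < P.len → ActiveTriple E Z (P.vert i) (P.vert j) (P.vert (j + 1))) :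
    ∃ Q : ActivePath E Z x y, Q.len < P.len := by
  set d := j - i - 1
  have hv : ∀ t, i < t → skip P.vert i d t = P.vert (t + d) := fun t => skip_of_lt
  have hv' : ∀ t ≤ i, skip P.vert i d t = P.vert t := fun t => skip_of_le
  have hvj : skip P.vert i d (i + 1) = P.vert j := by rw [hv _ (by omega)]; congr 1; omega
  refine ⟨⟨P.len - d, skip P.vert i d, by omega, (hv' 0 (by omega)).trans P.vert_zero,
    ?_, ?_, ?_, ?_⟩, by simp only; omega⟩
  · rw [hv _ (by omega), show P.len - d + d = P.len by omega, P.vert_len]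
  · intro t₁ h₁ t₂ h₂ hne
    apply P.injOn <;> split_ifs <;> omega
  · intro t ht
    rcases Nat.lt_trichotomy t i with h | rfl | h
    · rw [hv' _ h.le, hv' _ h]; exact P.step t (by omega)
    · rw [hv' _ le_rfl, hvj]; exact hstep
    · rw [hv _ h, hv _ (by omega), Nat.add_right_comm]; exact P.step _ (by omega)
  · intro t ht
    rcases lt_or_ge (t + 1) i with h | h
    · rw [hv' _ (by omega), hv' _ (by omega), hv' _ (by omega)]; exact P.active t (by omega)
    rcases h.eq_or_lt with h | h
    · rw [hv' t (by omega), hv' (t + 1) h.ge, show t + 2 = i + 1 by omega, hvj, ← h]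
      exact hleft t h.symm
    rcases (Nat.lt_succ_iff.mp h).eq_or_lt with h | h
    · rw [← h, hv' i le_rfl, hvj, hv _ (by omega), show i + 2 + d = j + 1 by omega]
      exact hright (by omega)
    · rw [hv _ h, hv _ (by omega), hv _ (by omega), Nat.add_right_comm, Nat.add_right_comm t 2]
      exact P.active _ (by omega)

theorem IsShortest.not_skelStep {P : ActivePath E Z x y} (hP : P.IsShortest) {i j : ℕ}
    (hij : i + 2 ≤ j) (hj : j ≤ P.len)
    (hleft : ∀ s, s + 1 = i → ActiveTriple E Z (P.vert s) (P.vert i) (P.vert j))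
    (hright : j < P.len → ActiveTriple E Z (P.vert i) (P.vert j) (P.vert (j + 1))) :
    ¬ SkelStep E (P.vert i) (P.vert j) := fun hstep =>
  let ⟨Q, hQ⟩ := P.exists_shorter hij hj hstep hleft hright
  absurd (hP Q) (by omega)

theorem exists_replace {a : ℕ} (ha : a + 2 ≤ P.len) {w : V}
    (hw : ∀ t ≤ P.len, P.vert t ≠ w)
    (hl : SkelStep E (P.vert a) w) (hr : SkelStep E w (P.vert (a + 2)))
    (hA : ∀ s, s + 1 = a → ActiveTriple E Z (P.vert s) (P.vert a) w)
    (hB : ActiveTriple E Z (P.vert a) w (P.vert (a + 2)))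
    (hC : a + 2 < P.len → ActiveTriple E Z w (P.vert (a + 2)) (P.vert (a + 3))) :
    ∃ Q : ActivePath E Z x y, Q.len = P.len ∧ Q.vert (a + 1) = w ∧
      ∀ t, t ≠ a + 1 → Q.vert t = P.vert t := by
  set v : ℕ → V := fun t => if t = a + 1 then w else P.vert t
  have hva : v (a + 1) = w := if_pos rfl
  have hv : ∀ t, t ≠ a + 1 → v t = P.vert t := fun t ht => if_neg ht
  refine ⟨⟨P.len, v, P.one_le_len, (hv 0 (by omega)).trans P.vert_zero,
    (hv _ (by omega)).trans P.vert_len, ?_, ?_, ?_⟩, rfl, hva, hv⟩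
  · intro i hi j hj hij
    by_cases h₁ : i = a + 1 <;> by_cases h₂ : j = a + 1
    · omega
    · rw [h₁, hva, hv j h₂]; exact (hw j hj).symm
    · rw [h₂, hva, hv i h₁]; exact hw i hi
    · rw [hv i h₁, hv j h₂]; exact P.injOn i hi j hj hij
  · intro t ht
    by_cases h₁ : t = a
    · subst h₁; rw [hv t (by omega), hva]; exact hl
    by_cases h₂ : t = a + 1
    · subst h₂; rw [hva, hv _ (by omega)]; exact hr
    · rw [hv t h₂, hv _ (by omega)]; exact P.step t ht
  · intro t ht
    by_cases h₁ : t + 1 = a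
    · rw [hv t (by omega), hv _ (by omega), show t + 2 = a + 1 by omega, hva, h₁]
      exact hA t h₁
    by_cases h₂ : t = a
    · subst h₂; rw [hv t (by omega), hva, hv (t + 2) (by omega)]; exact hB
    by_cases h₃ : t = a + 1
    · subst h₃; rw [hva, hv _ (by omega), hv _ (by omega)]; exact hC (by omega)
    · rw [hv t h₃, hv _ (by omega), hv _ (by omega)]; exact P.active t ht

end ActivePath

theorem DConn.nonempty_activePath (h : DConn E Z x y) (hxy : x ≠ y) :
    Nonempty (ActivePath E Z x y) := by
  obtain ⟨-, -, p, hnd, hch, hhd, hlt, hact⟩ := h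
  have hlen : 0 < p.length := List.length_pos_iff.mpr (by rintro rfl; simp at hhd)
  have hget : ∀ i (hi : i < p.length), p.getD i x = p[i] := fun i hi =>
    List.getD_eq_getElem _ _ hi
  rw [List.head?_eq_getElem?, List.getElem?_eq_getElem hlen] at hhd
  rw [List.getLast?_eq_getElem?, List.getElem?_eq_getElem (by omega)] at hlt
  have hx : p.getD 0 x = x := by rw [hget 0 hlen]; exact Option.some_injective _ hhd
  have hy : p.getD (p.length - 1) x = y := by
    rw [hget _ (by omega)]; exact Option.some_injective _ hlt
  refine ⟨⟨p.length - 1, fun i => p.getD i x, ?_, hx, hy, ?_, ?_, ?_⟩⟩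
  · by_contra h1
    exact hxy (hx.symm.trans ((congrArg (p.getD · x) (by omega : 0 = p.length - 1)).trans hy))
  · intro i hi j hj hij
    simp only [hget i (by omega), hget j (by omega)]
    exact fun h => hij ((hnd.getElem_inj_iff).mp h)
  · intro t ht
    simp only [hget t (by omega), hget (t + 1) (by omega)]
    exact List.isChain_iff_getElem.mp hch t (by omega)
  · intro t ht
    simp only [hget t (by omega), hget (t + 1) (by omega), hget (t + 2) (by omega)]
    exact hact t (by omega)

end ActivePaths

theorem exists_maximal_run (p : ℕ → Prop) {s k : ℕ} (h : s ≤ k) :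
    ∃ m, s ≤ m ∧ m ≤ k ∧ (∀ t, s ≤ t → t < m → p t) ∧ (m = k ∨ ¬ p m) := by
  classical
  have hex : ∃ m, s ≤ m ∧ (m = k ∨ ¬ p m) := ⟨k, h, Or.inl rfl⟩
  have hk := Nat.find_min' hex ⟨h, Or.inl rfl⟩
  obtain ⟨h₁, h₂⟩ := Nat.find_spec hex
  refine ⟨Nat.find hex, h₁, hk, fun t hst htm => ?_, h₂⟩
  by_contra hp
  exact Nat.find_min hex htm ⟨hst, Or.inr hp⟩

section Trek

variable {E : V → V → Prop} {Z : Set V} {x y : V} {u : ℕ → V} {m c : ℕ}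

/-- The trek `u 0 ← ⋯ ← u m → ⋯ → u c` with source `u m`. -/
def IsTrek (E : V → V → Prop) (u : ℕ → V) (m c : ℕ) : Prop :=
  m ≤ c ∧ (∀ t < m, E (u (t + 1)) (u t)) ∧ ∀ t, m ≤ t → t < c → E (u t) (u (t + 1))

namespace IsTrek

theorem mono (h : IsTrek E u m c) {c' : ℕ} (hm : m ≤ c') (hc : c' ≤ c) : IsTrek E u m c' :=
  ⟨hm, h.2.1, fun t h₁ h₂ => h.2.2 t h₁ (by omega)⟩

theorem edge_down (h : IsTrek E u m c) {s t : ℕ} (hs : s + 1 = t) (ht : t ≤ m) :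
    E (u t) (u s) := by
  subst hs; exact h.2.1 s ht

theorem edge_up (h : IsTrek E u m c) {s t : ℕ} (hs : s + 1 = t) (hm : m ≤ s) (hc : t ≤ c) :
    E (u s) (u t) := by
  subst hs; exact h.2.2 s hm hc

theorem transGen_down (h : IsTrek E u m c) {i j : ℕ} (hij : i < j) (hj : j ≤ m) :
    TransGen E (u j) (u i) :=
  transGen_of_chain_rev hij fun t _ ht => h.2.1 t (by omega)

theorem transGen_up (h : IsTrek E u m c) {i j : ℕ} (hi : m ≤ i) (hij : i < j) (hj : j ≤ c) :
    TransGen E (u i) (u j) :=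
  transGen_of_chain hij fun t ht ht' => h.2.2 t (by omega) (by omega)

theorem not_collider (hE : IsDAG E) (h : IsTrek E u m c) {s t r : ℕ} (hs : s + 1 = t)
    (hr : t + 1 = r) (hrc : r ≤ c) : ¬ (E (u s) (u t) ∧ E (u r) (u t)) := by
  rintro ⟨h₁, h₂⟩
  rcases le_or_gt t m with htm | htm
  · exact hE.asymm (h.edge_down hs htm) h₁
  · exact hE.asymm (h.edge_up hr (by omega) hrc) h₂

theorem not_mem (hE : IsDAG E) {P : ActivePath E Z x y} (h : IsTrek E P.vert m c)
    (hc : c ≤ P.len) {t : ℕ} (ht : 0 < t) (htc : t < c) : P.vert t ∉ Z :=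
  P.not_mem (s := t - 1) (by omega) rfl (by omega) (h.not_collider hE (by omega) rfl htc)

/-- A chord could shortcut `P`: the inner vertices of a trek are non-colliders outside `Z`, and a
chord against the direction of the trek closes a directed cycle. -/
theorem not_skelStep (hE : IsDAG E) {P : ActivePath E Z x y} (hP : P.IsShortest)
    (h : IsTrek E P.vert m c) (hc : c ≤ P.len) (hZc : 0 < c → c < P.len → P.vert c ∉ Z)
    {i j : ℕ} (hij : i + 2 ≤ j) (hjc : j ≤ c) : ¬ SkelStep E (P.vert i) (P.vert j) := by
  have hZ : ∀ t, 0 < t → t ≤ c → t < P.len → P.vert t ∉ Z := fun t h₀ h₁ h₂ =>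
    h₁.lt_or_eq.elim (h.not_mem hE hc h₀) fun e => e ▸ hZc (e ▸ h₀) (e ▸ h₂)
  rintro (hfw | hbw)
  · rcases le_or_gt j m with hjm | hmj
    · exact hE _ ((h.transGen_down (by omega) hjm).tail hfw)
    refine hP.not_skelStep hij (by omega)
      (fun s hs => .of_not_mem hE (hZ i (by omega) (by omega) (by omega)) (.inr hfw))
      (fun hj => ?_) (.inl hfw)
    rcases hjc.lt_or_eq with hjc | rfl
    · exact .of_not_mem hE (hZ j (by omega) hjc.le hj) (.inr (h.2.2 j hmj.le hjc))
    by_cases hcol : E (P.vert (j + 1)) (P.vert j)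
    · exact .of_collider hfw hcol
        (P.exists_desc (s := j - 1) (by omega) rfl hj (h.edge_up (by omega) (by omega) le_rfl) hcol)
    · exact .of_not_collider (fun h => hcol h.2) (hZ j (by omega) le_rfl hj)
  · rcases le_or_gt m i with hmi | him
    · exact hE _ ((h.transGen_up hmi (by omega) hjc).tail hbw)
    refine hP.not_skelStep hij (by omega)
      (fun s hs => .of_not_mem hE (hZ i (by omega) (by omega) (by omega))
        (.inl (h.edge_down hs him.le)))
      (fun hj => .of_not_mem hE (hZ j (by omega) hjc hj) (.inl hbw)) (.inr hbw)

end IsTrek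

theorem ActivePath.exists_trek (P : ActivePath E Z x y) :
    ∃ m c, IsTrek E P.vert m c ∧ c ≤ P.len ∧
      (c = P.len ∨ c < P.len ∧ m < c ∧ E (P.vert (c + 1)) (P.vert c)) := by
  obtain ⟨m, -, hmk, hm, hm'⟩ :=
    exists_maximal_run (fun t => E (P.vert (t + 1)) (P.vert t)) (Nat.zero_le P.len)
  obtain ⟨c, hmc, hck, hc, hc'⟩ :=
    exists_maximal_run (fun t => E (P.vert t) (P.vert (t + 1))) hmk
  refine ⟨m, c, ⟨hmc, fun t ht => hm t (Nat.zero_le t) ht, hc⟩, hck, ?_⟩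
  rcases hck.lt_or_eq with hck | hck
  · have hcol : E (P.vert (c + 1)) (P.vert c) :=
      (P.step c hck).resolve_left (hc'.resolve_left hck.ne)
    refine Or.inr ⟨hck, hmc.lt_of_ne ?_, hcol⟩
    rintro rfl
    exact hm'.resolve_left hck.ne hcol
  · exact Or.inl hck

theorem ActivePath.IsShortest.not_skelStep_of_collider (hE : IsDAG E)
    {P : ActivePath E Z x y} (hP : P.IsShortest) {a : ℕ} (ha : a + 2 ≤ P.len)
    (h₁ : E (P.vert a) (P.vert (a + 1))) (h₂ : E (P.vert (a + 2)) (P.vert (a + 1))) :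
    ¬ SkelStep E (P.vert a) (P.vert (a + 2)) := by
  obtain ⟨d, hd, hcd⟩ := P.exists_desc rfl rfl ha h₁ h₂
  exact hP.not_skelStep le_rfl ha
    (fun s hs => .of_not_mem_of_desc (P.not_mem hs rfl (by omega) fun h => hE.asymm h₁ h.2)
      ⟨d, hd, .head h₁ hcd⟩)
    (fun hlt => .of_not_mem_of_desc (P.not_mem (s := a + 1) rfl rfl hlt fun h => hE.asymm h₂ h.1)
      ⟨d, hd, .head h₂ hcd⟩)

/-- If `w = P.vert t`, then `P.vert (a + 1) → w` (for `t < a`) or `P.vert a → w`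
(for `t > a + 2`) is a chord shortening `P`. -/
theorem ActivePath.IsShortest.vert_ne_of_collider_child (hE : IsDAG E) {P : ActivePath E Z x y}
    (hP : P.IsShortest) {a : ℕ} (ht : IsTrek E P.vert m (a + 1)) (hm : m ≤ a)
    (ha : a + 2 ≤ P.len) (hcol : E (P.vert (a + 2)) (P.vert (a + 1))) (hZc : P.vert (a + 1) ∉ Z)
    {w : V} (hw : E (P.vert (a + 1)) w) (hlw : E (P.vert a) w)
    (hwd : ∃ d ∈ Z, ReflTransGen E w d) : ∀ t ≤ P.len, P.vert t ≠ w := by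
  have h₁ : E (P.vert a) (P.vert (a + 1)) := ht.edge_up rfl hm le_rfl
  obtain ⟨d, hd, hwd⟩ := hwd
  rintro t htl rfl
  rcases (show t + 2 ≤ a + 1 ∨ t = a ∨ t = a + 1 ∨ t = a + 2 ∨ a + 3 ≤ t by omega) with
    h | rfl | rfl | rfl | h
  · exact ht.not_skelStep hE hP (by omega) (fun _ _ => hZc) h le_rfl (.inr hw)
  · exact hE.asymm h₁ hw
  · exact hE.irrefl _ hw
  · exact hE.asymm hcol hw
  refine hP.not_skelStep (by omega : a + 2 ≤ t) htl (fun s hs => ?_) (fun hlt => ?_) (.inl hlw)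
  · exact .of_not_mem_of_desc (P.not_mem hs rfl (by omega) fun h => hE.asymm h₁ h.2)
      ⟨d, hd, .head hlw hwd⟩
  by_cases hc : E (P.vert (t + 1)) (P.vert t)
  · exact .of_collider hlw hc ⟨d, hd, hwd⟩
  · exact .of_not_collider (fun h => hc h.2)
      (P.not_mem (s := t - 1) (by omega) rfl hlt fun h => hc h.2)

theorem ActivePath.IsShortest.exists_replace_collider (hE : IsDAG E) {P : ActivePath E Z x y}
    (hP : P.IsShortest) {a : ℕ} (ht : IsTrek E P.vert m (a + 1)) (hm : m ≤ a)
    (ha : a + 2 ≤ P.len) (hcol : E (P.vert (a + 2)) (P.vert (a + 1))) (hZc : P.vert (a + 1) ∉ Z)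
    {w : V} (hw : E (P.vert (a + 1)) w) (hlw : E (P.vert a) w) (hrw : E (P.vert (a + 2)) w)
    (hwd : ∃ d ∈ Z, ReflTransGen E w d) :
    ∃ Q : ActivePath E Z x y, Q.IsShortest ∧ Q.len = P.len ∧ IsTrek E Q.vert m (a + 1) ∧
      E (Q.vert (a + 2)) (Q.vert (a + 1)) ∧ Q.vert (a + 1) = w := by
  have h₁ : E (P.vert a) (P.vert (a + 1)) := ht.edge_up rfl hm le_rfl
  obtain ⟨Q, hQlen, hQa, hQ⟩ := P.exists_replace ha
    (hP.vert_ne_of_collider_child hE ht hm ha hcol hZc hw hlw hwd) (.inl hlw) (.inr hrw)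
    (fun s hs => .of_not_mem_of_desc (P.not_mem hs rfl (by omega) fun h => hE.asymm h₁ h.2)
      (hwd.imp fun _ ⟨hd, hwd⟩ => ⟨hd, .head hlw hwd⟩))
    (.of_collider hlw hrw hwd)
    (fun h => .of_not_mem_of_desc (P.not_mem (s := a + 1) rfl rfl h fun h => hE.asymm hcol h.1)
      (hwd.imp fun _ ⟨hd, hwd⟩ => ⟨hd, .head hrw hwd⟩))
  refine ⟨Q, fun Q' => hQlen ▸ hP Q', hQlen,
    ⟨ht.1, fun t htm => ?_, fun t h₁ h₂ => ?_⟩, ?_, hQa⟩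
  · rw [hQ t (by omega), hQ (t + 1) (by omega)]; exact ht.2.1 t htm
  · rcases (Nat.lt_succ_iff.mp h₂).lt_or_eq with h₂ | rfl
    · rw [hQ t (by omega), hQ (t + 1) (by omega)]; exact ht.2.2 t h₁ (by omega)
    · rw [hQa, hQ t (by omega)]; exact hlw
  · rw [hQa, hQ (a + 2) (by omega)]; exact hrw

end Trek

section Class

variable {G : PDGraph V} {E : V → V → Prop} {x y : V}

theorem InClass.chain_of_pdStep (hE : InClass G E) {u : ℕ → V} {n : ℕ}
    (hstep : ∀ t < n, PDStep G (u t) (u (t + 1)))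
    (hshield : ∀ t, t + 2 ≤ n → G.undir (u (t + 1)) (u (t + 2)) →
      u t ≠ u (t + 2) ∧ ¬ G.adj (u t) (u (t + 2)))
    (h₀ : E (u 0) (u 1)) : ∀ t < n, E (u t) (u (t + 1)) := by
  intro t ht
  induction t with
  | zero => exact h₀
  | succ t ih => exact hE.orient_next (ih (by omega)) (hstep _ ht) (hshield t ht)

theorem IsCPDAG.exists_inClass_transGen (hG : IsCPDAG G) {u : ℕ → V} {n : ℕ} (hn : 0 < n)
    (hstep : ∀ t < n, PDStep G (u t) (u (t + 1)))
    (hshield : ∀ t, t + 2 ≤ n → G.undir (u (t + 1)) (u (t + 2)) →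
      u t ≠ u (t + 2) ∧ ¬ G.adj (u t) (u (t + 2))) :
    ∃ E, InClass G E ∧ TransGen E (u 0) (u n) := by
  obtain ⟨E, hE, h₀⟩ : ∃ E, InClass G E ∧ E (u 0) (u 1) := by
    rcases hstep 0 hn with h | h
    · obtain ⟨E, hE⟩ := hG.1; exact ⟨E, hE, hE.of_dir h⟩
    · exact hG.2 _ _ h
  exact ⟨E, hE, transGen_of_chain hn fun t _ ht => hE.chain_of_pdStep hstep hshield h₀ t ht⟩

/-- The functional form of a path `p` with `IsPDPath G x y p ∧ ChordlessIn G p`. -/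
structure ChordlessPDPath (G : PDGraph V) (x y : V) where
  len : ℕ
  vert : ℕ → V
  one_le_len : 1 ≤ len
  vert_zero : vert 0 = x
  vert_len : vert len = y
  injOn : ∀ i ≤ len, ∀ j ≤ len, i ≠ j → vert i ≠ vert j
  step : ∀ t < len, PDStep G (vert t) (vert (t + 1))
  chordless : ∀ i j, i + 2 ≤ j → j ≤ len → ¬ G.adj (vert i) (vert j)

namespace ChordlessPDPath

variable (P : ChordlessPDPath G x y)

theorem shield (t : ℕ) (ht : t + 2 ≤ P.len) :
    P.vert t ≠ P.vert (t + 2) ∧ ¬ G.adj (P.vert t) (P.vert (t + 2)) :=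
  ⟨P.injOn _ (by omega) _ ht (by omega), P.chordless t (t + 2) le_rfl ht⟩

theorem exists_inClass_transGen (P : ChordlessPDPath G x y) (hG : IsCPDAG G) :
    ∃ E, InClass G E ∧ TransGen E x y := by
  obtain ⟨E, hE, h⟩ := hG.exists_inClass_transGen P.one_le_len P.step fun t ht _ => P.shield t ht
  rw [P.vert_zero, P.vert_len] at h
  exact ⟨E, hE, h⟩

theorem not_mem_pa {t : ℕ} (h₀ : 0 < t) (ht : t ≤ P.len) : P.vert t ∉ G.pa x := by
  intro hpa
  rcases (show t = 1 ∨ 2 ≤ t by omega) with rfl | h₂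
  · rcases P.step 0 P.one_le_len with h | h <;> rw [P.vert_zero] at h
    exacts [G.not_double _ _ h hpa, G.not_mixed _ _ hpa (G.undir_symm h)]
  · exact P.chordless 0 t h₂ ht (Or.inr (Or.inl (by rw [P.vert_zero]; exact hpa)))

/-- No vertex of a chordless partially directed path from `x` is a collider or a parent of `x`. -/
theorem dConn (P : ChordlessPDPath G x y) (hE : InClass G E) : DConn E (G.pa x) x y := by
  refine ActivePath.dConn ⟨P.len, P.vert, P.one_le_len, P.vert_zero, P.vert_len, P.injOn,
    fun t ht => hE.skelStep_of_pdStep (P.step t ht),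
    fun t ht => .of_not_collider ?_ (P.not_mem_pa (by omega) (by omega))⟩
    (G.dir_irrefl x) (P.vert_len ▸ P.not_mem_pa P.one_le_len le_rfl)
  rintro ⟨h₁, h₂⟩
  exact hE.isDAG.asymm (hE.orient_next h₁ (P.step _ ht) fun _ => P.shield t ht) h₂

end ChordlessPDPath

theorem InClass.nonempty_chordlessPDPath (hE : InClass G E) (hxy : x ≠ y)
    (h : TransGen E x y) : Nonempty (ChordlessPDPath G x y) := by
  classical
  have hex : ∃ n, ∃ u : ℕ → V, u 0 = x ∧ u n = y ∧ ∀ t < n, E (u t) (u (t + 1)) :=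
    exists_chain_of_reflTransGen h.to_reflTransGen
  obtain ⟨u, hu₀, hun, hu⟩ := Nat.find_spec hex
  have hn : 1 ≤ Nat.find hex :=
    Nat.one_le_iff_ne_zero.mpr fun h₀ => hxy (hu₀.symm.trans (by rwa [h₀] at hun))
  have hchord : ∀ {i j}, i + 2 ≤ j → j ≤ Nat.find hex → ¬ SkelStep E (u i) (u j) :=
    hE.isDAG.not_skelStep_of_minimal_chain hu fun n' hn' v hv₀ hvn hv =>
      Nat.find_min hex hn' ⟨v, hv₀.trans hu₀, hvn.trans hun, hv⟩
  refine ⟨⟨Nat.find hex, u, hn, hu₀, hun, fun i hi j hj hij => ?_,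
    fun t ht => hE.pdStep_of_edge (hu t ht),
    fun i j hij hj hadj => hchord hij hj (hE.skelStep_of_adj hadj)⟩⟩
  rcases lt_or_gt_of_ne hij with h | h
  exacts [hE.isDAG.chain_injective hu h hj, (hE.isDAG.chain_injective hu h hi).symm]

theorem InClass.dConn_of_transGen {E' : V → V → Prop} (hE' : InClass G E') (hE : InClass G E)
    (hxy : x ≠ y) (h : TransGen E' x y) : DConn E (G.pa x) x y :=
  let ⟨P⟩ := hE'.nonempty_chordlessPDPath hxy h
  P.dConn hE

/-- The edges between `x` and the source `P.vert m` of the trek are undirected in `G`: the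
first one because `P.vert 1 ∉ pa x`, the others by `IsCPDAG.adj_of_dir_undir`. -/
theorem ActivePath.pdStep_of_trek (hG : IsCPDAG G) (hE : InClass G E)
    (P : ActivePath E (G.pa x) x y) {m c : ℕ} (ht : IsTrek E P.vert m c) (hc : c ≤ P.len)
    (hchord : ∀ i j, i + 2 ≤ j → j ≤ m → ¬ SkelStep E (P.vert i) (P.vert j))
    (h₁ : 0 < m → P.vert 1 ∉ G.pa x) : ∀ t < c, PDStep G (P.vert t) (P.vert (t + 1)) := by
  have hmc := ht.1
  have hundir : ∀ t < m, G.undir (P.vert t) (P.vert (t + 1)) := by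
    intro t htm
    induction t with
    | zero =>
      refine G.undir_symm (Or.resolve_left (hE.pdStep_of_edge (ht.2.1 0 htm)) fun h => ?_)
      exact h₁ htm (by rw [P.vert_zero] at h; exact h)
    | succ t ih =>
      refine G.undir_symm (Or.resolve_left (hE.pdStep_of_edge (ht.2.1 _ htm)) fun h => ?_)
      refine hchord t (t + 2) le_rfl htm (hE.skelStep_of_adj (PDGraph.adj_symm ?_))
      exact hG.adj_of_dir_undir h (G.undir_symm (ih (by omega)))
        (P.injOn _ (by omega) _ (by omega) (by omega))
  intro t htc
  rcases lt_or_ge t m with h | h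
  exacts [Or.inr (hundir t h), hE.pdStep_of_edge (ht.2.2 t h htc)]

end Class

section Main

variable {G : PDGraph V} {E : V → V → Prop} {x y : V} {m : ℕ}

theorem ActivePath.IsShortest.nonempty_chordlessPDPath (hG : IsCPDAG G) (hE : InClass G E)
    {P : ActivePath E (G.pa x) x y} (hP : P.IsShortest) (ht : IsTrek E P.vert m P.len)
    (hy : y ∉ G.pa x) : Nonempty (ChordlessPDPath G x y) := by
  have hchord : ∀ i j, i + 2 ≤ j → j ≤ P.len → ¬ SkelStep E (P.vert i) (P.vert j) :=
    fun i j => ht.not_skelStep hE.isDAG hP le_rfl fun _ h => absurd h (lt_irrefl _)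
  have h₁ : 0 < m → P.vert 1 ∉ G.pa x := fun _ =>
    P.one_le_len.lt_or_eq.elim (ht.not_mem hE.isDAG le_rfl one_pos) fun h => by
      rwa [h, P.vert_len]
  exact ⟨⟨P.len, P.vert, P.one_le_len, P.vert_zero, P.vert_len, P.injOn,
    P.pdStep_of_trek hG hE ht le_rfl (fun i j hij _ => hchord i j hij (by grind [IsTrek])) h₁,
    fun i j hij hj hadj => hchord i j hij hj (hE.skelStep_of_adj hadj)⟩⟩

theorem ActivePath.IsShortest.dir_of_collider {Z : Set V} (hE : InClass G E)
    {P : ActivePath E Z x y} (hP : P.IsShortest) {a : ℕ} (ha : a + 2 ≤ P.len)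
    (h₁ : E (P.vert a) (P.vert (a + 1))) (h₂ : E (P.vert (a + 2)) (P.vert (a + 1))) :
    G.dir (P.vert a) (P.vert (a + 1)) ∧ G.dir (P.vert (a + 2)) (P.vert (a + 1)) :=
  have hn := hP.not_skelStep_of_collider hE.isDAG ha h₁ h₂
  hE.dir_of_vStruct ⟨h₁, h₂, P.injOn _ (by omega) _ ha (by omega), hn ∘ .inl, hn ∘ .inr⟩

/-- The trek `x, …, P.vert (a + 1)` is chordless up to `P.vert a` and its last edge is
directed in `G`, so some member of the class orients all of it away from `x`. -/
theorem ActivePath.IsShortest.exists_inClass_transGen_of_collider (hG : IsCPDAG G)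
    (hE : InClass G E) {P : ActivePath E (G.pa x) x y} (hP : P.IsShortest) {a : ℕ}
    (ht : IsTrek E P.vert m (a + 1)) (hm : m ≤ a) (ha : a + 2 ≤ P.len)
    (hcol : E (P.vert (a + 2)) (P.vert (a + 1))) :
    ∃ E₂, InClass G E₂ ∧ TransGen E₂ x (P.vert (a + 1)) := by
  have hdag := hE.isDAG
  have hchord : ∀ i j, i + 2 ≤ j → j ≤ a → ¬ SkelStep E (P.vert i) (P.vert j) :=
    fun i j => (ht.mono hm a.le_succ).not_skelStep hdag hP (by omega)
      fun h₀ _ => ht.not_mem hdag (by omega) h₀ (lt_add_one a)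
  have hdir := (hP.dir_of_collider hE ha (ht.edge_up rfl hm le_rfl) hcol).1
  have hshield : ∀ t, t + 2 ≤ a + 1 → G.undir (P.vert (t + 1)) (P.vert (t + 2)) →
      P.vert t ≠ P.vert (t + 2) ∧ ¬ G.adj (P.vert t) (P.vert (t + 2)) := fun t _ hund => by
    rcases (show t + 1 = a ∨ t + 2 ≤ a by omega) with rfl | h
    · exact absurd hund (G.not_mixed _ _ hdir)
    · exact ⟨P.injOn _ (by omega) _ (by omega) (by omega),
        fun hadj => hchord t (t + 2) le_rfl h (hE.skelStep_of_adj hadj)⟩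
  obtain ⟨E₂, hE₂, h⟩ := hG.exists_inClass_transGen (by omega)
    (P.pdStep_of_trek hG hE ht (by omega) (fun i j hij _ => hchord i j hij (by omega))
      fun _ => ht.not_mem hdag (by omega) one_pos (by omega)) hshield
  rw [P.vert_zero] at h
  exact ⟨E₂, hE₂, h⟩

/-- Meek's rule R1 in `E₂` makes `b` and `w` adjacent, and the edge between them follows
`b → c → w` in `E`. -/
theorem InClass.edge_of_dir_of_not_edge {E₂ : V → V → Prop} (hE : InClass G E)
    (hE₂ : InClass G E₂) {b c w : V} (hb : G.dir b c) (hcw : E c w) (hcw₂ : ¬ E₂ c w) :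
    E b w := by
  have hbc := hE.of_dir hb
  have hund : G.undir c w := (hE.pdStep_of_edge hcw).resolve_left fun h => hcw₂ (hE₂.of_dir h)
  have hadj : G.adj b w := by
    by_contra hn
    refine hcw₂ (hE₂.orient_next (hE₂.of_dir hb) (.inr hund) fun _ => ⟨?_, hn⟩)
    rintro rfl
    exact hE.isDAG.asymm hbc hcw
  exact hE.isDAG.edge_of_transGen (hE.skelStep_of_adj hadj) (.head hbc (.single hcw))

/-- Induction on the length of a directed path `w` from the collider `P.vert (a + 1)` into
`pa x`. A member `E₂` of the class has a directed path from `x` to the collider; if it orients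
the first edge of `w` forward, it orients all of `w` and closes a cycle through `x`, and
otherwise `w 1` can replace the collider. -/
theorem ActivePath.IsShortest.false_of_collider (hG : IsCPDAG G) (hE : InClass G E)
    {P : ActivePath E (G.pa x) x y} (hP : P.IsShortest) {a : ℕ} (ht : IsTrek E P.vert m (a + 1))
    (hm : m ≤ a) (ha : a + 2 ≤ P.len) (hcol : E (P.vert (a + 2)) (P.vert (a + 1))) {l : ℕ}
    {w : ℕ → V} (hw₀ : w 0 = P.vert (a + 1)) (hw : ∀ s < l, E (w s) (w (s + 1)))
    (hwl : w l ∈ G.pa x) : False := by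
  induction l using Nat.strong_induction_on generalizing P w with
  | _ l ih =>
  have hdag := hE.isDAG
  obtain ⟨E₂, hE₂, hx₂⟩ := hP.exists_inClass_transGen_of_collider hG hE ht hm ha hcol
  have hZc : P.vert (a + 1) ∉ G.pa x := fun h => hE₂.isDAG x (hx₂.tail (hE₂.of_dir h))
  have hl : 0 < l := Nat.pos_of_ne_zero fun h => hZc (by rw [← hw₀]; rwa [h] at hwl)
  have hw₁ : E (P.vert (a + 1)) (w 1) := hw₀ ▸ hw 0 hl
  by_cases hfw : E₂ (P.vert (a + 1)) (w 1)
  · have hwchord : ∀ s, s + 2 ≤ l → ¬ SkelStep E (w s) (w (s + 2)) := fun s hs =>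
      hdag.not_skelStep_of_minimal_chain hw
        (fun l' hl' v hv₀ hvl hv => ih l' hl' hP ht ha hcol (hv₀.trans hw₀) hv (hvl ▸ hwl))
        le_rfl hs
    have hw₂ := hE₂.chain_of_pdStep (fun s hs => hE.pdStep_of_edge (hw s hs))
      (fun s hs _ => ⟨hdag.chain_injective hw (by omega) hs,
        fun hadj => hwchord s hs (hE.skelStep_of_adj hadj)⟩) (hw₀ ▸ hfw)
    have hcyc := hx₂.trans (hw₀ ▸ transGen_of_chain hl fun s _ hs => hw₂ s hs)
    exact hE₂.isDAG x (hcyc.tail (hE₂.of_dir hwl))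
  have hdir := hP.dir_of_collider hE ha (ht.edge_up rfl hm le_rfl) hcol
  obtain ⟨Q, hQ, hQlen, hQt, hQcol, hQa⟩ := hP.exists_replace_collider hdag ht hm ha hcol hZc
    hw₁ (hE.edge_of_dir_of_not_edge hE₂ hdir.1 hw₁ hfw)
    (hE.edge_of_dir_of_not_edge hE₂ hdir.2 hw₁ hfw)
    ⟨w l, hwl, reflTransGen_of_chain hl fun s _ hs => hw s hs⟩
  exact ih (l - 1) (by omega) hQ hQt (hQlen ▸ ha) hQcol (w := fun s => w (s + 1)) hQa.symm
    (fun s hs => hw (s + 1) (by omega)) (by rwa [Nat.sub_add_cancel hl])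

theorem InClass.dSep_of_definiteNonCause (hG : IsCPDAG G) (hE : InClass G E) (hxy : x ≠ y)
    (hnc : DefiniteNonCause G x y) : DSep E (G.pa x) x y := by
  intro hconn
  obtain ⟨P₀⟩ := hconn.nonempty_activePath hxy
  obtain ⟨P, hP⟩ := P₀.exists_isShortest
  obtain ⟨m, c, ht, hc, rfl | ⟨hcl, hmc, hcol⟩⟩ := P.exists_trek
  · obtain ⟨Q⟩ := hP.nonempty_chordlessPDPath hG hE ht hconn.2.1
    obtain ⟨E', hE', h⟩ := Q.exists_inClass_transGen hG
    exact hnc E' hE' h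
  obtain ⟨a, rfl⟩ : ∃ a, c = a + 1 := ⟨c - 1, by omega⟩
  obtain ⟨d, hd, hcd⟩ :=
    P.exists_desc (r := a + 2) rfl rfl (by omega) (ht.edge_up rfl (by omega) le_rfl) hcol
  obtain ⟨l, w, hw₀, hwl, hw⟩ := exists_chain_of_reflTransGen hcd
  exact hP.false_of_collider hG hE ht (by omega) (by omega) hcol hw₀ hw (hwl ▸ hd)

end Main

/-- `x` is a definite non-cause of `y` iff `x ⟂ y | pa(x, G*)` holds in some
(equivalently, every) DAG of the equivalence class. -/
theorem stmt10 (G : PDGraph V) (hG : IsCPDAG G) (x y : V) (hxy : x ≠ y) :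
    (DefiniteNonCause G x y ↔ ∃ E, InClass G E ∧ DSep E (G.pa x) x y) ∧
    (DefiniteNonCause G x y ↔ ∀ E, InClass G E → DSep E (G.pa x) x y) := by
  obtain ⟨E₀, hE₀⟩ := hG.1
  have hsep : DefiniteNonCause G x y → ∀ E, InClass G E → DSep E (G.pa x) x y :=
    fun h E hE => hE.dSep_of_definiteNonCause hG hxy h
  have hnc : ∀ E, InClass G E → DSep E (G.pa x) x y → DefiniteNonCause G x y :=
    fun E hE hd E' hE' h => hd (hE'.dConn_of_transGen hE hxy h)
  exact ⟨⟨fun h => ⟨E₀, hE₀, hsep h E₀ hE₀⟩, fun ⟨E, hE, hd⟩ => hnc E hE hd⟩,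
    ⟨hsep, fun h => hnc E₀ hE₀ (h E₀ hE₀)⟩⟩
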